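/- arXiv:1502.04774 — 3 statements merged into one kernel-verified Lean document; each statement's English description precedes it below -/
import Mathlib

section
/- Uniformity: For every QΛ type derivation π and every pair of sequences of occurrences O₁,…,Oₙ and P₁,…,Pₙ of the base type B in π, there is a unitary operator U on ℂ^(2^n) such that whenever (O₁,…,Oₙ,Q) →_π (P₁,…,Pₙ,R) in the token machine A_π, it holds that R = U(Q). -/
namespace QL

/-- Types of the linear quantum λ-calculus QΛ: `A ::= B | A ⊸ B | A ⊗ B`. -/
inductive QType : Type
  | bit : QType
  | lolli : QType → QType → QType
  | tens : QType → QType → QType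
  deriving DecidableEq

/-- A fixed finite set 𝒰 of unitary operators, each acting on `ℂ^(2^n)`
(indexed by `Fin n → Bool`) for its arity `n`. -/
structure GateSet where
  card : ℕ
  arity : Fin card → ℕ
  arity_pos : ∀ g, 0 < arity g
  mat : ∀ g, Matrix (Fin (arity g) → Bool) (Fin (arity g) → Bool) ℂ
  unitary : ∀ g, mat g ∈ Matrix.unitaryGroup (Fin (arity g) → Bool) ℂ

/-- Terms of QΛ: variables, labelled bit constants `|b⟩ₙ`, constants `U` for the
unitary operators of the gate set, tensor pairs, applications and (pattern) abstractions. -/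
inductive Term (G : GateSet) : Type
  | var : ℕ → Term G
  | bit : Bool → ℕ → Term G
  | gate : Fin G.card → Term G
  | tens : Term G → Term G → Term G
  | app : Term G → Term G → Term G
  | lam : ℕ → Term G → Term G
  | lamPair : ℕ → ℕ → Term G → Term G
  deriving DecidableEq

/-- `B^n`, the n-fold tensor `B ⊗ … ⊗ B` (right associated). -/
def nTens : ℕ → QType
  | 0 => QType.bit
  | 1 => QType.bit
  | n + 2 => QType.tens QType.bit (nTens (n + 1))

/-- Linear environments: each variable is assigned a type at most once. -/
abbrev Env := ℕ → Option QType

def Env.empty : Env := fun _ => none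
def Env.single (x : ℕ) (A : QType) : Env := fun y => if y = x then some A else none
def Env.updt (Γ : Env) (x : ℕ) (A : QType) : Env := fun y => if y = x then some A else Γ y
/-- Two environments assign types to disjoint sets of variables. -/
def Env.Disj (Γ Δ : Env) : Prop := ∀ x, Γ x = none ∨ Δ x = none
def Env.union (Γ Δ : Env) : Env := fun x =>
  match Γ x with
  | some A => some A
  | none => Δ x

/-- Type derivations of QΛ (Fig. 1): `Deriv G Γ M A` is the type of derivations
of the judgement `Γ ⊢ M : A`.  Contexts are treated multiplicatively. -/
inductive Deriv (G : GateSet) : Env → Term G → QType → Type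
  | ax (x : ℕ) (A : QType) : Deriv G (Env.single x A) (.var x) A
  | bit (b : Bool) (ℓ : ℕ) : Deriv G Env.empty (.bit b ℓ) .bit
  | gate (g : Fin G.card) :
      Deriv G Env.empty (.gate g) (.lolli (nTens (G.arity g)) (nTens (G.arity g)))
  | lam {Γ : Env} {x : ℕ} {A B : QType} {M : Term G} (hx : Γ x = none)
      (d : Deriv G (Γ.updt x A) M B) : Deriv G Γ (.lam x M) (.lolli A B)
  | lamPair {Γ : Env} {x y : ℕ} {A B C : QType} {M : Term G}
      (hxy : x ≠ y) (hx : Γ x = none) (hy : Γ y = none)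
      (d : Deriv G ((Γ.updt x A).updt y B) M C) :
      Deriv G Γ (.lamPair x y M) (.lolli (.tens A B) C)
  | app {Γ Δ : Env} {M N : Term G} {A B : QType} (h : Env.Disj Γ Δ)
      (d : Deriv G Γ M (.lolli A B)) (e : Deriv G Δ N A) :
      Deriv G (Γ.union Δ) (.app M N) B
  | tens {Γ Δ : Env} {M N : Term G} {A B : QType} (h : Env.Disj Γ Δ)
      (d : Deriv G Γ M A) (e : Deriv G Δ N B) :
      Deriv G (Γ.union Δ) (.tens M N) (.tens A B)

/-! ## The token machine IAM(QΛ) -/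

/-- A position in a judgement: either (the type of) a context variable, or the goal type. -/
inductive Slot : Type
  | ctx : ℕ → Slot
  | goal : Slot
  deriving DecidableEq

/-- An occurrence of the base type `B` in a type derivation: a path in the
derivation tree (choosing premises), a slot in the judgement reached, and a
path inside the type occurrence sitting there (`false` = left, `true` = right). -/
abbrev Occ := List ℕ × Slot × List Bool

def liftOcc (i : ℕ) (o : Occ) : Occ := (i :: o.1, o.2.1, o.2.2)

/-- Polarity of an occurrence of `B` inside a type: `some true` for positive,
`some false` for negative, `none` if the path does not lead to a `B`. -/
def occPol : QType → List Bool → Option Bool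
  | .bit, [] => some true
  | .lolli A _, false :: q => (occPol A q).map not
  | .lolli _ B, true :: q => occPol B q
  | .tens A _, false :: q => occPol A q
  | .tens _ B, true :: q => occPol B q
  | _, _ => none

/-- The path of the `k`-th `B` inside `B^m = nTens m`. -/
def tensPath : ℕ → ℕ → List Bool
  | 0, _ => []
  | 1, _ => []
  | _ + 2, 0 => [false]
  | m + 2, k + 1 => true :: tensPath (m + 1) k

/-- The single-token transitions of the machine `A_π` (Fig. 3), moving one
occurrence of `B` through the typing rules of the derivation, in the direction
prescribed by its polarity.  (The synchronous moves at unitary axioms are part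
of `Step` below.) -/
inductive Edge (G : GateSet) :
    ∀ {Γ : Env} {M : Term G} {A : QType}, Deriv G Γ M A → Occ → Occ → Prop
  -- (a_v)
  | ax_ctx {x : ℕ} {A : QType} {q : List Bool} (h : occPol A q = some true) :
      Edge G (.ax x A) ([], .ctx x, q) ([], .goal, q)
  | ax_goal {x : ℕ} {A : QType} {q : List Bool} (h : occPol A q = some false) :
      Edge G (.ax x A) ([], .goal, q) ([], .ctx x, q)
  -- (I⊸¹)
  | lam_var_out {Γ : Env} {x : ℕ} {A B : QType} {M : Term G} (hx : Γ x = none)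
      (d : Deriv G (Γ.updt x A) M B) {q : List Bool} (h : occPol A q = some false) :
      Edge G (.lam hx d) ([0], .ctx x, q) ([], .goal, false :: q)
  | lam_var_in {Γ : Env} {x : ℕ} {A B : QType} {M : Term G} (hx : Γ x = none)
      (d : Deriv G (Γ.updt x A) M B) {q : List Bool} (h : occPol A q = some true) :
      Edge G (.lam hx d) ([], .goal, false :: q) ([0], .ctx x, q)
  | lam_body_out {Γ : Env} {x : ℕ} {A B : QType} {M : Term G} (hx : Γ x = none)
      (d : Deriv G (Γ.updt x A) M B) {q : List Bool} (h : occPol B q = some true) :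
      Edge G (.lam hx d) ([0], .goal, q) ([], .goal, true :: q)
  | lam_body_in {Γ : Env} {x : ℕ} {A B : QType} {M : Term G} (hx : Γ x = none)
      (d : Deriv G (Γ.updt x A) M B) {q : List Bool} (h : occPol B q = some false) :
      Edge G (.lam hx d) ([], .goal, true :: q) ([0], .goal, q)
  | lam_ctx_up {Γ : Env} {x : ℕ} {A B : QType} {M : Term G} (hx : Γ x = none)
      (d : Deriv G (Γ.updt x A) M B) {v : ℕ} {C : QType} {q : List Bool}
      (hv : Γ v = some C) (h : occPol C q = some true) :
      Edge G (.lam hx d) ([], .ctx v, q) ([0], .ctx v, q)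
  | lam_ctx_down {Γ : Env} {x : ℕ} {A B : QType} {M : Term G} (hx : Γ x = none)
      (d : Deriv G (Γ.updt x A) M B) {v : ℕ} {C : QType} {q : List Bool}
      (hv : Γ v = some C) (h : occPol C q = some false) :
      Edge G (.lam hx d) ([0], .ctx v, q) ([], .ctx v, q)
  -- (I⊸²)
  | lamPair_x_out {Γ : Env} {x y : ℕ} {A B C : QType} {M : Term G}
      (hxy : x ≠ y) (hx : Γ x = none) (hy : Γ y = none)
      (d : Deriv G ((Γ.updt x A).updt y B) M C) {q : List Bool}
      (h : occPol A q = some false) :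
      Edge G (.lamPair hxy hx hy d) ([0], .ctx x, q) ([], .goal, false :: false :: q)
  | lamPair_x_in {Γ : Env} {x y : ℕ} {A B C : QType} {M : Term G}
      (hxy : x ≠ y) (hx : Γ x = none) (hy : Γ y = none)
      (d : Deriv G ((Γ.updt x A).updt y B) M C) {q : List Bool}
      (h : occPol A q = some true) :
      Edge G (.lamPair hxy hx hy d) ([], .goal, false :: false :: q) ([0], .ctx x, q)
  | lamPair_y_out {Γ : Env} {x y : ℕ} {A B C : QType} {M : Term G}
      (hxy : x ≠ y) (hx : Γ x = none) (hy : Γ y = none)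
      (d : Deriv G ((Γ.updt x A).updt y B) M C) {q : List Bool}
      (h : occPol B q = some false) :
      Edge G (.lamPair hxy hx hy d) ([0], .ctx y, q) ([], .goal, false :: true :: q)
  | lamPair_y_in {Γ : Env} {x y : ℕ} {A B C : QType} {M : Term G}
      (hxy : x ≠ y) (hx : Γ x = none) (hy : Γ y = none)
      (d : Deriv G ((Γ.updt x A).updt y B) M C) {q : List Bool}
      (h : occPol B q = some true) :
      Edge G (.lamPair hxy hx hy d) ([], .goal, false :: true :: q) ([0], .ctx y, q)
  | lamPair_body_out {Γ : Env} {x y : ℕ} {A B C : QType} {M : Term G}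
      (hxy : x ≠ y) (hx : Γ x = none) (hy : Γ y = none)
      (d : Deriv G ((Γ.updt x A).updt y B) M C) {q : List Bool}
      (h : occPol C q = some true) :
      Edge G (.lamPair hxy hx hy d) ([0], .goal, q) ([], .goal, true :: q)
  | lamPair_body_in {Γ : Env} {x y : ℕ} {A B C : QType} {M : Term G}
      (hxy : x ≠ y) (hx : Γ x = none) (hy : Γ y = none)
      (d : Deriv G ((Γ.updt x A).updt y B) M C) {q : List Bool}
      (h : occPol C q = some false) :
      Edge G (.lamPair hxy hx hy d) ([], .goal, true :: q) ([0], .goal, q)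
  | lamPair_ctx_up {Γ : Env} {x y : ℕ} {A B C : QType} {M : Term G}
      (hxy : x ≠ y) (hx : Γ x = none) (hy : Γ y = none)
      (d : Deriv G ((Γ.updt x A).updt y B) M C) {v : ℕ} {D : QType} {q : List Bool}
      (hv : Γ v = some D) (h : occPol D q = some true) :
      Edge G (.lamPair hxy hx hy d) ([], .ctx v, q) ([0], .ctx v, q)
  | lamPair_ctx_down {Γ : Env} {x y : ℕ} {A B C : QType} {M : Term G}
      (hxy : x ≠ y) (hx : Γ x = none) (hy : Γ y = none)
      (d : Deriv G ((Γ.updt x A).updt y B) M C) {v : ℕ} {D : QType} {q : List Bool}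
      (hv : Γ v = some D) (h : occPol D q = some false) :
      Edge G (.lamPair hxy hx hy d) ([0], .ctx v, q) ([], .ctx v, q)
  -- (E⊸)
  | app_arg_toFun {Γ Δ : Env} {M N : Term G} {A B : QType} (h : Env.Disj Γ Δ)
      (d : Deriv G Γ M (.lolli A B)) (e : Deriv G Δ N A) {q : List Bool}
      (hq : occPol A q = some true) :
      Edge G (.app h d e) ([1], .goal, q) ([0], .goal, false :: q)
  | app_arg_toArg {Γ Δ : Env} {M N : Term G} {A B : QType} (h : Env.Disj Γ Δ)
      (d : Deriv G Γ M (.lolli A B)) (e : Deriv G Δ N A) {q : List Bool}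
      (hq : occPol A q = some false) :
      Edge G (.app h d e) ([0], .goal, false :: q) ([1], .goal, q)
  | app_res_down {Γ Δ : Env} {M N : Term G} {A B : QType} (h : Env.Disj Γ Δ)
      (d : Deriv G Γ M (.lolli A B)) (e : Deriv G Δ N A) {q : List Bool}
      (hq : occPol B q = some true) :
      Edge G (.app h d e) ([0], .goal, true :: q) ([], .goal, q)
  | app_res_up {Γ Δ : Env} {M N : Term G} {A B : QType} (h : Env.Disj Γ Δ)
      (d : Deriv G Γ M (.lolli A B)) (e : Deriv G Δ N A) {q : List Bool}
      (hq : occPol B q = some false) :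
      Edge G (.app h d e) ([], .goal, q) ([0], .goal, true :: q)
  | app_ctxL_up {Γ Δ : Env} {M N : Term G} {A B : QType} (h : Env.Disj Γ Δ)
      (d : Deriv G Γ M (.lolli A B)) (e : Deriv G Δ N A) {v : ℕ} {C : QType}
      {q : List Bool} (hv : Γ v = some C) (hq : occPol C q = some true) :
      Edge G (.app h d e) ([], .ctx v, q) ([0], .ctx v, q)
  | app_ctxL_down {Γ Δ : Env} {M N : Term G} {A B : QType} (h : Env.Disj Γ Δ)
      (d : Deriv G Γ M (.lolli A B)) (e : Deriv G Δ N A) {v : ℕ} {C : QType}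
      {q : List Bool} (hv : Γ v = some C) (hq : occPol C q = some false) :
      Edge G (.app h d e) ([0], .ctx v, q) ([], .ctx v, q)
  | app_ctxR_up {Γ Δ : Env} {M N : Term G} {A B : QType} (h : Env.Disj Γ Δ)
      (d : Deriv G Γ M (.lolli A B)) (e : Deriv G Δ N A) {v : ℕ} {C : QType}
      {q : List Bool} (hv : Δ v = some C) (hq : occPol C q = some true) :
      Edge G (.app h d e) ([], .ctx v, q) ([1], .ctx v, q)
  | app_ctxR_down {Γ Δ : Env} {M N : Term G} {A B : QType} (h : Env.Disj Γ Δ)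
      (d : Deriv G Γ M (.lolli A B)) (e : Deriv G Δ N A) {v : ℕ} {C : QType}
      {q : List Bool} (hv : Δ v = some C) (hq : occPol C q = some false) :
      Edge G (.app h d e) ([1], .ctx v, q) ([], .ctx v, q)
  -- (I⊗)
  | tens_left_in {Γ Δ : Env} {M N : Term G} {A B : QType} (h : Env.Disj Γ Δ)
      (d : Deriv G Γ M A) (e : Deriv G Δ N B) {q : List Bool}
      (hq : occPol A q = some false) :
      Edge G (.tens h d e) ([], .goal, false :: q) ([0], .goal, q)
  | tens_left_out {Γ Δ : Env} {M N : Term G} {A B : QType} (h : Env.Disj Γ Δ)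
      (d : Deriv G Γ M A) (e : Deriv G Δ N B) {q : List Bool}
      (hq : occPol A q = some true) :
      Edge G (.tens h d e) ([0], .goal, q) ([], .goal, false :: q)
  | tens_right_in {Γ Δ : Env} {M N : Term G} {A B : QType} (h : Env.Disj Γ Δ)
      (d : Deriv G Γ M A) (e : Deriv G Δ N B) {q : List Bool}
      (hq : occPol B q = some false) :
      Edge G (.tens h d e) ([], .goal, true :: q) ([1], .goal, q)
  | tens_right_out {Γ Δ : Env} {M N : Term G} {A B : QType} (h : Env.Disj Γ Δ)
      (d : Deriv G Γ M A) (e : Deriv G Δ N B) {q : List Bool}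
      (hq : occPol B q = some true) :
      Edge G (.tens h d e) ([1], .goal, q) ([], .goal, true :: q)
  | tens_ctxL_up {Γ Δ : Env} {M N : Term G} {A B : QType} (h : Env.Disj Γ Δ)
      (d : Deriv G Γ M A) (e : Deriv G Δ N B) {v : ℕ} {C : QType} {q : List Bool}
      (hv : Γ v = some C) (hq : occPol C q = some true) :
      Edge G (.tens h d e) ([], .ctx v, q) ([0], .ctx v, q)
  | tens_ctxL_down {Γ Δ : Env} {M N : Term G} {A B : QType} (h : Env.Disj Γ Δ)
      (d : Deriv G Γ M A) (e : Deriv G Δ N B) {v : ℕ} {C : QType} {q : List Bool}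
      (hv : Γ v = some C) (hq : occPol C q = some false) :
      Edge G (.tens h d e) ([0], .ctx v, q) ([], .ctx v, q)
  | tens_ctxR_up {Γ Δ : Env} {M N : Term G} {A B : QType} (h : Env.Disj Γ Δ)
      (d : Deriv G Γ M A) (e : Deriv G Δ N B) {v : ℕ} {C : QType} {q : List Bool}
      (hv : Δ v = some C) (hq : occPol C q = some true) :
      Edge G (.tens h d e) ([], .ctx v, q) ([1], .ctx v, q)
  | tens_ctxR_down {Γ Δ : Env} {M N : Term G} {A B : QType} (h : Env.Disj Γ Δ)
      (d : Deriv G Γ M A) (e : Deriv G Δ N B) {v : ℕ} {C : QType} {q : List Bool}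
      (hv : Δ v = some C) (hq : occPol C q = some false) :
      Edge G (.tens h d e) ([1], .ctx v, q) ([], .ctx v, q)
  -- lifting of transitions of subderivations
  | lift_lam {Γ : Env} {x : ℕ} {A B : QType} {M : Term G} (hx : Γ x = none)
      (d : Deriv G (Γ.updt x A) M B) {o o' : Occ} :
      Edge G d o o' → Edge G (.lam hx d) (liftOcc 0 o) (liftOcc 0 o')
  | lift_lamPair {Γ : Env} {x y : ℕ} {A B C : QType} {M : Term G}
      (hxy : x ≠ y) (hx : Γ x = none) (hy : Γ y = none)
      (d : Deriv G ((Γ.updt x A).updt y B) M C) {o o' : Occ} :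
      Edge G d o o' → Edge G (.lamPair hxy hx hy d) (liftOcc 0 o) (liftOcc 0 o')
  | lift_app_left {Γ Δ : Env} {M N : Term G} {A B : QType} (h : Env.Disj Γ Δ)
      (d : Deriv G Γ M (.lolli A B)) (e : Deriv G Δ N A) {o o' : Occ} :
      Edge G d o o' → Edge G (.app h d e) (liftOcc 0 o) (liftOcc 0 o')
  | lift_app_right {Γ Δ : Env} {M N : Term G} {A B : QType} (h : Env.Disj Γ Δ)
      (d : Deriv G Γ M (.lolli A B)) (e : Deriv G Δ N A) {o o' : Occ} :
      Edge G e o o' → Edge G (.app h d e) (liftOcc 1 o) (liftOcc 1 o')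
  | lift_tens_left {Γ Δ : Env} {M N : Term G} {A B : QType} (h : Env.Disj Γ Δ)
      (d : Deriv G Γ M A) (e : Deriv G Δ N B) {o o' : Occ} :
      Edge G d o o' → Edge G (.tens h d e) (liftOcc 0 o) (liftOcc 0 o')
  | lift_tens_right {Γ Δ : Env} {M N : Term G} {A B : QType} (h : Env.Disj Γ Δ)
      (d : Deriv G Γ M A) (e : Deriv G Δ N B) {o o' : Occ} :
      Edge G e o o' → Edge G (.tens h d e) (liftOcc 1 o) (liftOcc 1 o')

/-- `GateAt G d p g` holds when the axiom `(a_U)` for the unitary `g` occurs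
at path `p` in the derivation `d`. -/
inductive GateAt (G : GateSet) :
    ∀ {Γ : Env} {M : Term G} {A : QType}, Deriv G Γ M A → List ℕ → Fin G.card → Prop
  | here (g : Fin G.card) : GateAt G (.gate g) [] g
  | in_lam {Γ : Env} {x : ℕ} {A B : QType} {M : Term G} (hx : Γ x = none)
      (d : Deriv G (Γ.updt x A) M B) {p : List ℕ} {g : Fin G.card} :
      GateAt G d p g → GateAt G (.lam hx d) (0 :: p) g
  | in_lamPair {Γ : Env} {x y : ℕ} {A B C : QType} {M : Term G}
      (hxy : x ≠ y) (hx : Γ x = none) (hy : Γ y = none)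
      (d : Deriv G ((Γ.updt x A).updt y B) M C) {p : List ℕ} {g : Fin G.card} :
      GateAt G d p g → GateAt G (.lamPair hxy hx hy d) (0 :: p) g
  | in_app_left {Γ Δ : Env} {M N : Term G} {A B : QType} (h : Env.Disj Γ Δ)
      (d : Deriv G Γ M (.lolli A B)) (e : Deriv G Δ N A) {p : List ℕ} {g : Fin G.card} :
      GateAt G d p g → GateAt G (.app h d e) (0 :: p) g
  | in_app_right {Γ Δ : Env} {M N : Term G} {A B : QType} (h : Env.Disj Γ Δ)
      (d : Deriv G Γ M (.lolli A B)) (e : Deriv G Δ N A) {p : List ℕ} {g : Fin G.card} :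
      GateAt G e p g → GateAt G (.app h d e) (1 :: p) g
  | in_tens_left {Γ Δ : Env} {M N : Term G} {A B : QType} (h : Env.Disj Γ Δ)
      (d : Deriv G Γ M A) (e : Deriv G Δ N B) {p : List ℕ} {g : Fin G.card} :
      GateAt G d p g → GateAt G (.tens h d e) (0 :: p) g
  | in_tens_right {Γ Δ : Env} {M N : Term G} {A B : QType} (h : Env.Disj Γ Δ)
      (d : Deriv G Γ M A) (e : Deriv G Δ N B) {p : List ℕ} {g : Fin G.card} :
      GateAt G e p g → GateAt G (.tens h d e) (1 :: p) g

/-- A quantum register on `n` quantum bits: a vector in `ℂ^(2^n)`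
(with its Euclidean/L² norm). -/
abbrev Reg (n : ℕ) : Type := EuclideanSpace ℂ (Fin n → Bool)

/-- `U^{i₁,…,iₘ}`: the operator on `n` qubits acting like `U = mat g` on the
qubits at the (distinct) positions `ι 0, …, ι (m-1)` and as the identity elsewhere. -/
def liftMat (G : GateSet) (g : Fin G.card) {n : ℕ} (ι : Fin (G.arity g) → Fin n) :
    Matrix (Fin n → Bool) (Fin n → Bool) ℂ :=
  fun f f' =>
    if ∀ j, (∀ k, ι k ≠ j) → f j = f' j then G.mat g (f ∘ ι) (f' ∘ ι) else 0

/-- States of the token machine: a number `n` of tokens, the occurrences at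
which the `n` tokens currently sit, and a quantum register on `n` qubits. -/
def TMState : Type := Σ n : ℕ, (Fin n → Occ) × Reg n

/-- A state of `A_π` has a normalised quantum register. -/
def Normalised (s : TMState) : Prop := ‖s.2.2‖ = 1

/-- The transition relation `→_π` of the machine `A_π`: either a single token
moves along an `Edge`, or the `m` tokens sitting at the argument occurrences of
a unitary axiom of arity `m` synchronously move to its result occurrences while
the operator is applied to the register. -/
inductive Step (G : GateSet) {Γ : Env} {M : Term G} {A : QType} (d : Deriv G Γ M A) :
    TMState → TMState → Prop
  | single {n : ℕ} (toks : Fin n → Occ) (Q : Reg n) (i : Fin n) (o' : Occ)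
      (h : Edge G d (toks i) o') :
      Step G d ⟨n, toks, Q⟩ ⟨n, Function.update toks i o', Q⟩
  | sync {n : ℕ} (toks toks' : Fin n → Occ) (Q : Reg n) {p : List ℕ} {g : Fin G.card}
      (hg : GateAt G d p g) (ι : Fin (G.arity g) → Fin n) (hinj : Function.Injective ι)
      (harg : ∀ k, toks (ι k) = (p, .goal, false :: tensPath (G.arity g) (k : ℕ)))
      (hres : ∀ k, toks' (ι k) = (p, .goal, true :: tensPath (G.arity g) (k : ℕ)))
      (hoth : ∀ j, (∀ k, ι k ≠ j) → toks' j = toks j) :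
      Step G d ⟨n, toks, Q⟩ ⟨n, toks', (WithLp.toLp 2 ((liftMat G g ι).mulVec Q) : Reg n)⟩

/-!
A transition either moves one token along an edge, leaving the register unchanged, or fires the
axiom of a gate `U` at some path `p`, applying `U` lifted to the token positions `ι`. Which case
occurs, and with which `p`, `U` and `ι`, is determined by the occurrences `O` and `P` alone: a
gate move turns the tokens at `ι` from the argument into the result occurrences of the gate at
`p`, which no edge can do because edges never stay at the path of a gate; and `p`, the gate and
`ι` can be read off from `O` and `P`. The lifted operator is unitary, being a reindexing of
`U ⊗ 1`.
-/

section Reindexing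

variable {α β γ : Type*}

open Classical in
noncomputable def splitAlong (ι : α → β) (hι : Function.Injective ι) :
    (β → γ) ≃ (α → γ) × ({b // ∀ a, ι a ≠ b} → γ) where
  toFun f := (f ∘ ι, fun b => f b)
  invFun uv b :=
    if h : ∃ a, ι a = b then uv.1 h.choose else uv.2 ⟨b, fun a ha => h ⟨a, ha⟩⟩
  left_inv f := by
    funext b
    by_cases h : ∃ a, ι a = b
    · simp only [dif_pos h, Function.comp_apply, h.choose_spec]
    · simp only [dif_neg h]
  right_inv := by
    rintro ⟨u, v⟩
    ext a
    · have h : ∃ a', ι a' = ι a := ⟨a, rfl⟩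
      simp only [Function.comp_apply, dif_pos h, hι h.choose_spec]
    · exact dif_neg fun ⟨a', ha'⟩ => a.2 a' ha'

lemma submatrix_equiv_mem_unitaryGroup [Fintype α] [DecidableEq α] [Fintype β] [DecidableEq β]
    {R : Type*} [CommRing R] [StarRing R] {U : Matrix α α R}
    (hU : U ∈ Matrix.unitaryGroup α R) (e : β ≃ α) :
    U.submatrix e e ∈ Matrix.unitaryGroup β R := by
  rw [Matrix.mem_unitaryGroup_iff, Matrix.star_eq_conjTranspose, Matrix.conjTranspose_submatrix,
    Matrix.submatrix_mul_equiv, ← Matrix.star_eq_conjTranspose,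
    Matrix.mem_unitaryGroup_iff.mp hU, Matrix.submatrix_one_equiv]

end Reindexing

open scoped Kronecker in
lemma liftMat_eq_submatrix_kronecker (G : GateSet) (g : Fin G.card) {n : ℕ}
    {ι : Fin (G.arity g) → Fin n} (hι : Function.Injective ι) :
    liftMat G g ι =
      (G.mat g ⊗ₖ (1 : Matrix ({j // ∀ k, ι k ≠ j} → Bool) _ ℂ)).submatrix
        (splitAlong ι hι) (splitAlong ι hι) := by
  ext f f'
  simp [liftMat, splitAlong, Matrix.one_apply, funext_iff]

lemma liftMat_mem_unitaryGroup (G : GateSet) (g : Fin G.card) {n : ℕ}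
    {ι : Fin (G.arity g) → Fin n} (hι : Function.Injective ι) :
    liftMat G g ι ∈ Matrix.unitaryGroup (Fin n → Bool) ℂ := by
  rw [liftMat_eq_submatrix_kronecker G g hι]
  exact submatrix_equiv_mem_unitaryGroup
    (Matrix.kronecker_mem_unitary (G.unitary g) (one_mem _)) _

lemma tensPath_injOn : ∀ m, Set.InjOn (tensPath m) (Set.Iio m)
  | 0, k, hk, _, _, _ => absurd hk (Nat.not_lt_zero k)
  | 1, k, hk, k', hk', _ => by simp_all
  | _ + 2, 0, _, 0, _, _ => rfl
  | _ + 2, 0, _, _ + 1, _, h => by simp [tensPath] at h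
  | _ + 2, _ + 1, _, 0, _, h => by simp [tensPath] at h
  | m + 2, k + 1, hk, k' + 1, hk', h => by
      simp only [tensPath, List.cons.injEq, true_and] at h
      simpa using tensPath_injOn (m + 1) (by simpa using hk) (by simpa using hk') h

variable {G : GateSet}

/-- `cases` cannot invert `GateAt` (its environment indices are not constructor forms), so the
gate at a path is also computed by recursion. -/
def Deriv.gateAt? :
    ∀ {Γ : Env} {M : Term G} {A : QType}, Deriv G Γ M A → List ℕ → Option (Fin G.card)
  | _, _, _, .gate g, [] => some g
  | _, _, _, .lam _ d, 0 :: p => d.gateAt? p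
  | _, _, _, .lamPair _ _ _ d, 0 :: p => d.gateAt? p
  | _, _, _, .app _ d _, 0 :: p => d.gateAt? p
  | _, _, _, .app _ _ e, 1 :: p => e.gateAt? p
  | _, _, _, .tens _ d _, 0 :: p => d.gateAt? p
  | _, _, _, .tens _ _ e, 1 :: p => e.gateAt? p
  | _, _, _, _, _ => none

variable {Γ : Env} {M : Term G} {A : QType} {d : Deriv G Γ M A}

lemma GateAt.gateAt?_eq {p : List ℕ} {g : Fin G.card} (h : GateAt G d p g) :
    d.gateAt? p = some g := by
  induction h <;> simp [Deriv.gateAt?, *]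

lemma GateAt.unique {p : List ℕ} {g g' : Fin G.card} (h : GateAt G d p g)
    (h' : GateAt G d p g') : g = g' :=
  Option.some.inj (h.gateAt?_eq.symm.trans h'.gateAt?_eq)

lemma Edge.gateAt?_eq_none {o o' : Occ} (he : Edge G d o o') (hp : o'.1 = o.1) :
    d.gateAt? o.1 = none := by
  induction he <;> simp_all [liftOcc, Deriv.gateAt?]

structure IsGateMove {n : ℕ} (d : Deriv G Γ M A) (O P : Fin n → Occ) (p : List ℕ)
    (g : Fin G.card) (ι : Fin (G.arity g) → Fin n) : Prop where
  gateAt : GateAt G d p g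
  injective : Function.Injective ι
  arg : ∀ k, O (ι k) = (p, .goal, false :: tensPath (G.arity g) (k : ℕ))
  res : ∀ k, P (ι k) = (p, .goal, true :: tensPath (G.arity g) (k : ℕ))
  other : ∀ j, (∀ k, ι k ≠ j) → P j = O j

lemma Step.single_or_gateMove {n : ℕ} {O P : Fin n → Occ} {Q R : Reg n}
    (h : Step G d ⟨n, O, Q⟩ ⟨n, P, R⟩) :
    (R = Q ∧ ∃ i o', Edge G d (O i) o' ∧ P = Function.update O i o') ∨
      ∃ p g ι, IsGateMove d O P p g ι ∧
        R = (WithLp.toLp 2 ((liftMat G g ι).mulVec Q) : Reg n) := by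
  cases h with
  | single _ _ i o' he => exact .inl ⟨rfl, i, o', he, rfl⟩
  | sync _ _ _ hg ι hι harg hres hoth =>
    exact .inr ⟨_, _, ι, ⟨hg, hι, harg, hres, hoth⟩, rfl⟩

namespace IsGateMove

variable {n : ℕ} {O P : Fin n → Occ} {p : List ℕ} {g : Fin G.card}
  {ι : Fin (G.arity g) → Fin n}

lemma apply_ne {k : Fin (G.arity g)} (hm : IsGateMove d O P p g ι) : P (ι k) ≠ O (ι k) := by
  simp [hm.arg, hm.res]

lemma ne_update (hm : IsGateMove d O P p g ι) {i : Fin n} {o' : Occ}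
    (he : Edge G d (O i) o') : P ≠ Function.update O i o' := by
  rintro rfl
  let k : Fin (G.arity g) := ⟨0, G.arity_pos g⟩
  have hki : ι k = i := by
    by_contra hne
    exact hm.apply_ne (Function.update_of_ne hne _ _)
  have hO : (O i).1 = p := by rw [← hki, hm.arg]
  have ho' : o'.1 = p := by
    simpa [hki] using congrArg Prod.fst (hm.res k)
  have := he.gateAt?_eq_none (ho'.trans hO.symm)
  rw [hO, hm.gateAt.gateAt?_eq] at this
  exact Option.some_ne_none _ this

lemma apply_mem_range {p' : List ℕ} {g' : Fin G.card} {ι' : Fin (G.arity g') → Fin n}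
    (hm : IsGateMove d O P p g ι) (hm' : IsGateMove d O P p' g' ι') (k' : Fin (G.arity g')) :
    ι' k' ∈ Set.range ι := by
  by_contra h
  exact hm'.apply_ne (hm.other _ fun k hk => h ⟨k, hk⟩)

lemma liftMat_eq {p' : List ℕ} {g' : Fin G.card} {ι' : Fin (G.arity g') → Fin n}
    (hm : IsGateMove d O P p g ι) (hm' : IsGateMove d O P p' g' ι') :
    liftMat G g ι = liftMat G g' ι' := by
  obtain ⟨k₀, hk₀⟩ := hm.apply_mem_range hm' ⟨0, G.arity_pos g'⟩
  obtain rfl : p' = p := by simpa [hk₀, hm'.arg] using congrArg Prod.fst (hm.arg k₀)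
  obtain rfl : g = g' := hm.gateAt.unique hm'.gateAt
  suffices ι = ι' by rw [this]
  funext k'
  obtain ⟨k, hk⟩ := hm.apply_mem_range hm' k'
  have hpath := hm.arg k
  rw [hk, hm'.arg k'] at hpath
  have : (k' : ℕ) = k := tensPath_injOn _ k'.isLt k.isLt (by simpa using hpath)
  rw [← hk, Fin.ext this]

end IsGateMove

/-- **Uniformity**: for every derivation `π` and occurrences `O₁,…,Oₙ`,
`P₁,…,Pₙ`, there is a unitary `U` such that whenever
`(O₁,…,Oₙ,Q) →_π (P₁,…,Pₙ,R)` it holds that `R = U(Q)`. -/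
theorem uniformity (G : GateSet) {Γ : Env} {M : Term G} {A : QType}
    (d : Deriv G Γ M A) (n : ℕ) (O P : Fin n → Occ) :
    ∃ U : Matrix (Fin n → Bool) (Fin n → Bool) ℂ,
      U ∈ Matrix.unitaryGroup (Fin n → Bool) ℂ ∧
      ∀ (Q R : Reg n), ‖Q‖ = 1 → Step G d ⟨n, O, Q⟩ ⟨n, P, R⟩ →
        R = (WithLp.toLp 2 (U.mulVec Q) : Reg n) := by
  by_cases hgate : ∃ p g ι, IsGateMove d O P p g ι
  · obtain ⟨p, g, ι, hm⟩ := hgate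
    refine ⟨liftMat G g ι, liftMat_mem_unitaryGroup G g hm.injective, fun Q R _ hstep => ?_⟩
    rcases hstep.single_or_gateMove with ⟨-, i, o', he, hP⟩ | ⟨p', g', ι', hm', rfl⟩
    · exact absurd hP (hm.ne_update he)
    · rw [hm'.liftMat_eq hm]
  · refine ⟨1, one_mem _, fun Q R _ hstep => ?_⟩
    rcases hstep.single_or_gateMove with ⟨rfl, -⟩ | ⟨p, g, ι, hm, -⟩
    · simp
    · exact absurd ⟨p, g, ι, hm⟩ hgate

end QL
end

section
/- Normal forms of equational derivations: For all superposed QΛ terms 𝒯, 𝒮, a context Γ and type A, the judgement Γ ⊢ 𝒯 ≈ 𝒮 : A is derivable if and only if it has a derivation in normal form, i.e. a derivation which either consists of a single instance of the reflexivity rule, or in which along every branch instances of the axiom rules {beta, beta.pair, quant} come first, possibly followed by instances of the context-closure rules {l.a, r.a, in.λ, in.λ.pair, l.in.tens, r.in.tens}, possibly followed by instances of the sum rule, possibly followed by instances of symmetry, possibly followed by instances of transitivity. -/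
namespace QL

variable {G : GateSet}

/-- Free variables of a term. -/
def fv : Term G → Finset ℕ
  | .var x => {x}
  | .bit _ _ => ∅
  | .gate _ => ∅
  | .tens M N => fv M ∪ fv N
  | .app M N => fv M ∪ fv N
  | .lam x M => (fv M).erase x
  | .lamPair x y M => ((fv M).erase x).erase y

/-- Renaming of the free occurrences of a variable. -/
def ren : Term G → ℕ → ℕ → Term G
  | .var z, x, y => if z = x then .var y else .var z
  | .bit b ℓ, _, _ => .bit b ℓ
  | .gate g, _, _ => .gate g
  | .tens M N, x, y => .tens (ren M x y) (ren N x y)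
  | .app M N, x, y => .app (ren M x y) (ren N x y)
  | .lam z M, x, y => if z = x then .lam z M else .lam z (ren M x y)
  | .lamPair z w M, x, y =>
      if z = x ∨ w = x then .lamPair z w M else .lamPair z w (ren M x y)

def tsize : Term G → ℕ
  | .var _ => 1
  | .bit _ _ => 1
  | .gate _ => 1
  | .tens M N => tsize M + tsize N + 1
  | .app M N => tsize M + tsize N + 1
  | .lam _ M => tsize M + 1
  | .lamPair _ _ M => tsize M + 1

/-- A simultaneous substitution, as an association list. -/
abbrev SubstMap (G : GateSet) := List (ℕ × Term G)

def fvs (σ : SubstMap G) : Finset ℕ := σ.foldr (fun p s => fv p.2 ∪ s) ∅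
def doms (σ : SubstMap G) : Finset ℕ := σ.foldr (fun p s => insert p.1 s) ∅
/-- A variable fresh for a given finite set of variables. -/
def freshVar (s : Finset ℕ) : ℕ := (s.sup id) + 1
def lookupV (x : ℕ) : SubstMap G → Option (Term G)
  | [] => none
  | p :: σ => if p.1 = x then some p.2 else lookupV x σ

/-- Fuelled capture-avoiding simultaneous substitution (bound variables are
renamed to fresh ones whenever a capture could occur). -/
def ssubstF : ℕ → Term G → SubstMap G → Term G
  | 0, M, _ => M
  | k + 1, M, σ =>
    match M with
    | .var z => (lookupV z σ).getD (.var z)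
    | .bit b ℓ => .bit b ℓ
    | .gate g => .gate g
    | .tens M₁ M₂ => .tens (ssubstF k M₁ σ) (ssubstF k M₂ σ)
    | .app M₁ M₂ => .app (ssubstF k M₁ σ) (ssubstF k M₂ σ)
    | .lam y M₁ =>
      let σ' := σ.filter (fun p => p.1 ≠ y)
      if y ∈ fvs σ' then
        let z := freshVar (fv M₁ ∪ fvs σ' ∪ doms σ' ∪ {y})
        .lam z (ssubstF k (ren M₁ y z) σ')
      else .lam y (ssubstF k M₁ σ')
    | .lamPair y w M₁ =>
      let σ' := σ.filter (fun p => p.1 ≠ y ∧ p.1 ≠ w)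
      if y ∈ fvs σ' ∨ w ∈ fvs σ' then
        let base := fv M₁ ∪ fvs σ' ∪ doms σ' ∪ {y, w}
        let z := freshVar base
        let z' := freshVar (insert z base)
        .lamPair z z' (ssubstF k (ren (ren M₁ y z) w z') σ')
      else .lamPair y w (ssubstF k M₁ σ')

/-- Capture-avoiding simultaneous substitution `M{N₁,…,Nₙ/x₁,…,xₙ}`. -/
def ssubst (M : Term G) (σ : SubstMap G) : Term G := ssubstF (tsize M) M σ

/-- Capture-avoiding substitution `M{N/x}`. -/
def subst1 (M : Term G) (x : ℕ) (N : Term G) : Term G := ssubst M [(x, N)]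

/-! ## Superposed terms and the equational theory -/

/-- A superposed term `𝒯 = Σᵢ κᵢ Mᵢ`: a formal ℂ-weighted sum of terms. -/
abbrev Superp (G : GateSet) := Term G →₀ ℂ

/-- `𝒯` is a superposed term of type `(Γ, A)`: every term of the sum has type
`A` in the context `Γ`. -/
def WellTyped (Γ : Env) (T : Superp G) (A : QType) : Prop :=
  ∀ M ∈ T.support, Nonempty (Deriv G Γ M A)

/-- A term, seen as a superposed term. -/
noncomputable def singleT (M : Term G) : Superp G := Finsupp.single M 1

/-- The term `|b₁⟩_{ℓ₁} ⊗ … ⊗ |b_k⟩_{ℓ_k}` (right associated). -/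
def bitsTerm (G : GateSet) : (k : ℕ) → (Fin k → Bool) → (Fin k → ℕ) → Term G
  | 0, _, _ => .bit false 0
  | 1, b, ℓ => .bit (b 0) (ℓ 0)
  | k + 2, b, ℓ =>
      .tens (.bit (b 0) (ℓ 0)) (bitsTerm G (k + 1) (fun i => b i.succ) (fun i => ℓ i.succ))

/-- The superposed term given by the vector `𝐔|b₁…b_k⟩ ∈ ℂ^(2^k)`. -/
noncomputable def gateOut (g : Fin G.card) (b : Fin (G.arity g) → Bool)
    (ℓ : Fin (G.arity g) → ℕ) : Superp G :=
  ∑ c : Fin (G.arity g) → Bool,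
    G.mat g c b • Finsupp.single (bitsTerm G (G.arity g) c ℓ) (1 : ℂ)

/-- The equational theory `≈` of QΛ (Fig. 2), a relation on superposed terms
indexed by contexts and types. -/
inductive Eqv (G : GateSet) : Env → Superp G → Superp G → QType → Prop
  -- axioms
  | beta {Γ : Env} {x : ℕ} {M N : Term G} {A : QType}
      (h : Nonempty (Deriv G Γ (.app (.lam x M) N) A)) :
      Eqv G Γ (singleT (.app (.lam x M) N)) (singleT (subst1 M x N)) A
  | betaPair {Γ : Env} {x y : ℕ} {M N L : Term G} {A : QType}
      (h : Nonempty (Deriv G Γ (.app (.lamPair x y M) (.tens N L)) A)) :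
      Eqv G Γ (singleT (.app (.lamPair x y M) (.tens N L)))
        (singleT (ssubst M [(x, N), (y, L)])) A
  | quant {g : Fin G.card} {b : Fin (G.arity g) → Bool} {ℓ : Fin (G.arity g) → ℕ}
      (h : Nonempty (Deriv G Env.empty (.app (.gate g) (bitsTerm G (G.arity g) b ℓ))
        (nTens (G.arity g)))) :
      Eqv G Env.empty (singleT (.app (.gate g) (bitsTerm G (G.arity g) b ℓ)))
        (gateOut g b ℓ) (nTens (G.arity g))
  -- context closure
  | appL {Γ Δ : Env} {T S : Superp G} {M : Term G} {A B : QType} (hd : Env.Disj Γ Δ)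
      (h : Eqv G Γ T S (.lolli A B)) (hM : Nonempty (Deriv G Δ M A)) :
      Eqv G (Γ.union Δ) (Finsupp.mapDomain (fun N => Term.app N M) T)
        (Finsupp.mapDomain (fun N => Term.app N M) S) B
  | appR {Γ Δ : Env} {T S : Superp G} {M : Term G} {A B : QType} (hd : Env.Disj Γ Δ)
      (hM : Nonempty (Deriv G Γ M (.lolli A B))) (h : Eqv G Δ T S A) :
      Eqv G (Γ.union Δ) (Finsupp.mapDomain (Term.app M) T)
        (Finsupp.mapDomain (Term.app M) S) B
  | inLam {Γ : Env} {x : ℕ} {T S : Superp G} {A B : QType} (hx : Γ x = none)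
      (h : Eqv G (Γ.updt x A) T S B) :
      Eqv G Γ (Finsupp.mapDomain (Term.lam x) T) (Finsupp.mapDomain (Term.lam x) S)
        (.lolli A B)
  | inLamPair {Γ : Env} {x y : ℕ} {T S : Superp G} {A B C : QType}
      (hxy : x ≠ y) (hx : Γ x = none) (hy : Γ y = none)
      (h : Eqv G ((Γ.updt x A).updt y B) T S C) :
      Eqv G Γ (Finsupp.mapDomain (Term.lamPair x y) T)
        (Finsupp.mapDomain (Term.lamPair x y) S) (.lolli (.tens A B) C)
  | tensL {Γ Δ : Env} {T S : Superp G} {M : Term G} {A B : QType} (hd : Env.Disj Γ Δ)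
      (h : Eqv G Γ T S A) (hM : Nonempty (Deriv G Δ M B)) :
      Eqv G (Γ.union Δ) (Finsupp.mapDomain (fun N => Term.tens N M) T)
        (Finsupp.mapDomain (fun N => Term.tens N M) S) (.tens A B)
  | tensR {Γ Δ : Env} {T S : Superp G} {M : Term G} {A B : QType} (hd : Env.Disj Γ Δ)
      (hM : Nonempty (Deriv G Γ M A)) (h : Eqv G Δ T S B) :
      Eqv G (Γ.union Δ) (Finsupp.mapDomain (Term.tens M) T)
        (Finsupp.mapDomain (Term.tens M) S) (.tens A B)
  | sum {Γ : Env} {T S V : Superp G} {A : QType} (α : ℂ)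
      (h : Eqv G Γ T S A) (hV : WellTyped Γ V A) :
      Eqv G Γ (α • T + V) (α • S + V) A
  -- reflexivity, symmetry, transitivity
  | refl {Γ : Env} {T : Superp G} {A : QType} (h : WellTyped Γ T A) : Eqv G Γ T T A
  | symm {Γ : Env} {T S : Superp G} {A : QType} (h : Eqv G Γ T S A) : Eqv G Γ S T A
  | trans {Γ : Env} {T S V : Superp G} {A : QType}
      (h₁ : Eqv G Γ T S A) (h₂ : Eqv G Γ S V A) : Eqv G Γ T V A

/-! ## Normal forms of equational derivations -/

/-- Judgements derivable by a single instance of an axiom rule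
(`beta`, `beta.pair`, `quant`). -/
inductive EqAx (G : GateSet) : Env → Superp G → Superp G → QType → Prop
  | beta {Γ : Env} {x : ℕ} {M N : Term G} {A : QType}
      (h : Nonempty (Deriv G Γ (.app (.lam x M) N) A)) :
      EqAx G Γ (singleT (.app (.lam x M) N)) (singleT (subst1 M x N)) A
  | betaPair {Γ : Env} {x y : ℕ} {M N L : Term G} {A : QType}
      (h : Nonempty (Deriv G Γ (.app (.lamPair x y M) (.tens N L)) A)) :
      EqAx G Γ (singleT (.app (.lamPair x y M) (.tens N L)))
        (singleT (ssubst M [(x, N), (y, L)])) A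
  | quant {g : Fin G.card} {b : Fin (G.arity g) → Bool} {ℓ : Fin (G.arity g) → ℕ}
      (h : Nonempty (Deriv G Env.empty (.app (.gate g) (bitsTerm G (G.arity g) b ℓ))
        (nTens (G.arity g)))) :
      EqAx G Env.empty (singleT (.app (.gate g) (bitsTerm G (G.arity g) b ℓ)))
        (gateOut g b ℓ) (nTens (G.arity g))

/-- Axioms, possibly followed by instances of the context-closure rules
`{l.a, r.a, in.λ, in.λ.pair, l.in.tens, r.in.tens}`. -/
inductive EqCC (G : GateSet) : Env → Superp G → Superp G → QType → Prop
  | ofAx {Γ : Env} {T S : Superp G} {A : QType} (h : EqAx G Γ T S A) : EqCC G Γ T S A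
  | appL {Γ Δ : Env} {T S : Superp G} {M : Term G} {A B : QType} (hd : Env.Disj Γ Δ)
      (h : EqCC G Γ T S (.lolli A B)) (hM : Nonempty (Deriv G Δ M A)) :
      EqCC G (Γ.union Δ) (Finsupp.mapDomain (fun N => Term.app N M) T)
        (Finsupp.mapDomain (fun N => Term.app N M) S) B
  | appR {Γ Δ : Env} {T S : Superp G} {M : Term G} {A B : QType} (hd : Env.Disj Γ Δ)
      (hM : Nonempty (Deriv G Γ M (.lolli A B))) (h : EqCC G Δ T S A) :
      EqCC G (Γ.union Δ) (Finsupp.mapDomain (Term.app M) T)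
        (Finsupp.mapDomain (Term.app M) S) B
  | inLam {Γ : Env} {x : ℕ} {T S : Superp G} {A B : QType} (hx : Γ x = none)
      (h : EqCC G (Γ.updt x A) T S B) :
      EqCC G Γ (Finsupp.mapDomain (Term.lam x) T) (Finsupp.mapDomain (Term.lam x) S)
        (.lolli A B)
  | inLamPair {Γ : Env} {x y : ℕ} {T S : Superp G} {A B C : QType}
      (hxy : x ≠ y) (hx : Γ x = none) (hy : Γ y = none)
      (h : EqCC G ((Γ.updt x A).updt y B) T S C) :
      EqCC G Γ (Finsupp.mapDomain (Term.lamPair x y) T)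
        (Finsupp.mapDomain (Term.lamPair x y) S) (.lolli (.tens A B) C)
  | tensL {Γ Δ : Env} {T S : Superp G} {M : Term G} {A B : QType} (hd : Env.Disj Γ Δ)
      (h : EqCC G Γ T S A) (hM : Nonempty (Deriv G Δ M B)) :
      EqCC G (Γ.union Δ) (Finsupp.mapDomain (fun N => Term.tens N M) T)
        (Finsupp.mapDomain (fun N => Term.tens N M) S) (.tens A B)
  | tensR {Γ Δ : Env} {T S : Superp G} {M : Term G} {A B : QType} (hd : Env.Disj Γ Δ)
      (hM : Nonempty (Deriv G Γ M A)) (h : EqCC G Δ T S B) :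
      EqCC G (Γ.union Δ) (Finsupp.mapDomain (Term.tens M) T)
        (Finsupp.mapDomain (Term.tens M) S) (.tens A B)

/-- … possibly followed by instances of the `sum` rule. -/
inductive EqSum (G : GateSet) : Env → Superp G → Superp G → QType → Prop
  | ofCC {Γ : Env} {T S : Superp G} {A : QType} (h : EqCC G Γ T S A) : EqSum G Γ T S A
  | sum {Γ : Env} {T S V : Superp G} {A : QType} (α : ℂ)
      (h : EqSum G Γ T S A) (hV : WellTyped Γ V A) :
      EqSum G Γ (α • T + V) (α • S + V) A

/-- … possibly followed by instances of symmetry. -/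
inductive EqSym (G : GateSet) : Env → Superp G → Superp G → QType → Prop
  | ofSum {Γ : Env} {T S : Superp G} {A : QType} (h : EqSum G Γ T S A) : EqSym G Γ T S A
  | symm {Γ : Env} {T S : Superp G} {A : QType} (h : EqSym G Γ T S A) : EqSym G Γ S T A

/-- … possibly followed by instances of transitivity. -/
inductive EqTrans (G : GateSet) : Env → Superp G → Superp G → QType → Prop
  | ofSym {Γ : Env} {T S : Superp G} {A : QType} (h : EqSym G Γ T S A) : EqTrans G Γ T S A
  | trans {Γ : Env} {T S V : Superp G} {A : QType}
      (h₁ : EqTrans G Γ T S A) (h₂ : EqTrans G Γ S V A) : EqTrans G Γ T V A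

/-- `Γ ⊢ 𝒯 ∼ 𝒮 : A`: the judgement has a derivation in normal form, i.e. either
a single instance of reflexivity, or a derivation in which along every branch
axioms come first, then context closure, then `sum`, then symmetry, then
transitivity. -/
def EqNF (G : GateSet) (Γ : Env) (T S : Superp G) (A : QType) : Prop :=
  (T = S ∧ WellTyped Γ T A) ∨ EqTrans G Γ T S A


/-! ### Auxiliary lemmas -/

lemma EqAx.toEqv {Γ : Env} {T S : Superp G} {A : QType} (h : EqAx G Γ T S A) :
    Eqv G Γ T S A := by
  cases h with
  | beta h => exact Eqv.beta h
  | betaPair h => exact Eqv.betaPair h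
  | quant h => exact Eqv.quant h

lemma EqCC.toEqv {Γ : Env} {T S : Superp G} {A : QType} (h : EqCC G Γ T S A) :
    Eqv G Γ T S A := by
  induction h with
  | ofAx h => exact h.toEqv
  | appL hd _ hM ih => exact Eqv.appL hd ih hM
  | appR hd hM _ ih => exact Eqv.appR hd hM ih
  | inLam hx _ ih => exact Eqv.inLam hx ih
  | inLamPair hxy hx hy _ ih => exact Eqv.inLamPair hxy hx hy ih
  | tensL hd _ hM ih => exact Eqv.tensL hd ih hM
  | tensR hd hM _ ih => exact Eqv.tensR hd hM ih

lemma EqSum.toEqv {Γ : Env} {T S : Superp G} {A : QType} (h : EqSum G Γ T S A) :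
    Eqv G Γ T S A := by
  induction h with
  | ofCC h => exact h.toEqv
  | sum α _ hV ih => exact Eqv.sum α ih hV

lemma EqSym.toEqv {Γ : Env} {T S : Superp G} {A : QType} (h : EqSym G Γ T S A) :
    Eqv G Γ T S A := by
  induction h with
  | ofSum h => exact h.toEqv
  | symm _ ih => exact Eqv.symm ih

lemma EqTrans.toEqv {Γ : Env} {T S : Superp G} {A : QType} (h : EqTrans G Γ T S A) :
    Eqv G Γ T S A := by
  induction h with
  | ofSym h => exact h.toEqv
  | trans _ _ ih₁ ih₂ => exact Eqv.trans ih₁ ih₂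

lemma WellTyped.mapDomain {Γ' Γ : Env} {A' A : QType} {f : Term G → Term G}
    (hf : ∀ M, Nonempty (Deriv G Γ' M A') → Nonempty (Deriv G Γ (f M) A))
    {T : Superp G} (hT : WellTyped Γ' T A') :
    WellTyped Γ (Finsupp.mapDomain f T) A := by
  intro M hM
  have := Finsupp.mapDomain_support hM
  obtain ⟨N, hN, rfl⟩ := Finset.mem_image.mp this
  exact hf N (hT N hN)

lemma WellTyped.sumc {Γ : Env} {A : QType} {T V : Superp G} (α : ℂ)
    (hT : WellTyped Γ T A) (hV : WellTyped Γ V A) :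
    WellTyped Γ (α • T + V) A := by
  intro M hM
  have h1 := Finsupp.support_add hM
  rcases Finset.mem_union.mp h1 with h | h
  · exact hT M (Finsupp.support_smul h)
  · exact hV M h

/-- Push a context-closure step through `EqSum`. -/
lemma EqSum.cc {Γ' Γ : Env} {A' A : QType} {f : Term G → Term G}
    (hcc : ∀ T S : Superp G, EqCC G Γ' T S A' →
      EqCC G Γ (Finsupp.mapDomain f T) (Finsupp.mapDomain f S) A)
    (hf : ∀ M, Nonempty (Deriv G Γ' M A') → Nonempty (Deriv G Γ (f M) A))
    {T S : Superp G} (h : EqSum G Γ' T S A') :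
    EqSum G Γ (Finsupp.mapDomain f T) (Finsupp.mapDomain f S) A := by
  induction h with
  | ofCC h => exact EqSum.ofCC (hcc _ _ h)
  | sum α h hV ih =>
      rw [Finsupp.mapDomain_add, Finsupp.mapDomain_add,
        Finsupp.mapDomain_smul, Finsupp.mapDomain_smul]
      exact EqSum.sum α (ih hcc hf) (hV.mapDomain hf)

lemma EqSym.cc {Γ' Γ : Env} {A' A : QType} {f : Term G → Term G}
    (hcc : ∀ T S : Superp G, EqCC G Γ' T S A' →
      EqCC G Γ (Finsupp.mapDomain f T) (Finsupp.mapDomain f S) A)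
    (hf : ∀ M, Nonempty (Deriv G Γ' M A') → Nonempty (Deriv G Γ (f M) A))
    {T S : Superp G} (h : EqSym G Γ' T S A') :
    EqSym G Γ (Finsupp.mapDomain f T) (Finsupp.mapDomain f S) A := by
  induction h with
  | ofSum h => exact EqSym.ofSum (h.cc hcc hf)
  | symm _ ih => exact EqSym.symm (ih hcc hf)

lemma EqTrans.cc {Γ' Γ : Env} {A' A : QType} {f : Term G → Term G}
    (hcc : ∀ T S : Superp G, EqCC G Γ' T S A' →
      EqCC G Γ (Finsupp.mapDomain f T) (Finsupp.mapDomain f S) A)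
    (hf : ∀ M, Nonempty (Deriv G Γ' M A') → Nonempty (Deriv G Γ (f M) A))
    {T S : Superp G} (h : EqTrans G Γ' T S A') :
    EqTrans G Γ (Finsupp.mapDomain f T) (Finsupp.mapDomain f S) A := by
  induction h with
  | ofSym h => exact EqTrans.ofSym (h.cc hcc hf)
  | trans _ _ ih₁ ih₂ => exact EqTrans.trans (ih₁ hcc hf) (ih₂ hcc hf)

lemma EqNF.cc {Γ' Γ : Env} {A' A : QType} {f : Term G → Term G}
    (hcc : ∀ T S : Superp G, EqCC G Γ' T S A' →
      EqCC G Γ (Finsupp.mapDomain f T) (Finsupp.mapDomain f S) A)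
    (hf : ∀ M, Nonempty (Deriv G Γ' M A') → Nonempty (Deriv G Γ (f M) A))
    {T S : Superp G} (h : EqNF G Γ' T S A') :
    EqNF G Γ (Finsupp.mapDomain f T) (Finsupp.mapDomain f S) A := by
  rcases h with ⟨rfl, hT⟩ | h
  · exact Or.inl ⟨rfl, hT.mapDomain hf⟩
  · exact Or.inr (h.cc hcc hf)

/-- Push `sum` through symmetry. -/
lemma EqSym.sumc {Γ : Env} {A : QType} {T S V : Superp G} (α : ℂ)
    (h : EqSym G Γ T S A) (hV : WellTyped Γ V A) :
    EqSym G Γ (α • T + V) (α • S + V) A := by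
  induction h with
  | ofSum h => exact EqSym.ofSum (EqSum.sum α h hV)
  | symm _ ih => exact EqSym.symm (ih hV)

lemma EqTrans.sumc {Γ : Env} {A : QType} {T S V : Superp G} (α : ℂ)
    (h : EqTrans G Γ T S A) (hV : WellTyped Γ V A) :
    EqTrans G Γ (α • T + V) (α • S + V) A := by
  induction h with
  | ofSym h => exact EqTrans.ofSym (h.sumc α hV)
  | trans _ _ ih₁ ih₂ => exact EqTrans.trans (ih₁ hV) (ih₂ hV)

lemma EqTrans.symmc {Γ : Env} {A : QType} {T S : Superp G}
    (h : EqTrans G Γ T S A) : EqTrans G Γ S T A := by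
  induction h with
  | ofSym h => exact EqTrans.ofSym h.symm
  | trans _ _ ih₁ ih₂ => exact EqTrans.trans ih₂ ih₁

lemma EqNF.sumc {Γ : Env} {A : QType} {T S V : Superp G} (α : ℂ)
    (h : EqNF G Γ T S A) (hV : WellTyped Γ V A) :
    EqNF G Γ (α • T + V) (α • S + V) A := by
  rcases h with ⟨rfl, hT⟩ | h
  · exact Or.inl ⟨rfl, hT.sumc α hV⟩
  · exact Or.inr (h.sumc α hV)

lemma EqNF.symmc {Γ : Env} {A : QType} {T S : Superp G}
    (h : EqNF G Γ T S A) : EqNF G Γ S T A := by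
  rcases h with ⟨rfl, hT⟩ | h
  · exact Or.inl ⟨rfl, hT⟩
  · exact Or.inr h.symmc

lemma EqNF.transc {Γ : Env} {A : QType} {T S V : Superp G}
    (h₁ : EqNF G Γ T S A) (h₂ : EqNF G Γ S V A) : EqNF G Γ T V A := by
  rcases h₁ with ⟨rfl, _⟩ | h₁
  · exact h₂
  rcases h₂ with ⟨rfl, _⟩ | h₂
  · exact Or.inr h₁
  · exact Or.inr (h₁.trans h₂)

lemma EqNF.ofAx {Γ : Env} {T S : Superp G} {A : QType} (h : EqAx G Γ T S A) :
    EqNF G Γ T S A :=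
  Or.inr (EqTrans.ofSym (EqSym.ofSum (EqSum.ofCC (EqCC.ofAx h))))

/-- **Normal forms of equational derivations**: `Γ ⊢ 𝒯 ≈ 𝒮 : A` is derivable
iff it has a derivation in normal form (a single reflexivity instance, or
axioms first, then context closure, then `sum`, then symmetry, then
transitivity along every branch). -/
theorem eqv_iff_normal_form (G : GateSet) (Γ : Env) (T S : Superp G) (A : QType) :
    Eqv G Γ T S A ↔ EqNF G Γ T S A := by
  constructor
  · intro h
    induction h with
    | beta h => exact EqNF.ofAx (EqAx.beta h)
    | betaPair h => exact EqNF.ofAx (EqAx.betaPair h)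
    | quant h => exact EqNF.ofAx (EqAx.quant h)
    | appL hd _ hM ih =>
        exact ih.cc (fun _ _ h => EqCC.appL hd h hM)
          (fun N hN => hN.map2 (fun d e => Deriv.app hd d e) hM)
    | appR hd hM _ ih =>
        exact ih.cc (fun _ _ h => EqCC.appR hd hM h)
          (fun N hN => hM.map2 (fun d e => Deriv.app hd d e) hN)
    | inLam hx _ ih =>
        exact ih.cc (fun _ _ h => EqCC.inLam hx h)
          (fun N hN => hN.map (fun d => Deriv.lam hx d))
    | inLamPair hxy hx hy _ ih =>
        exact ih.cc (fun _ _ h => EqCC.inLamPair hxy hx hy h)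
          (fun N hN => hN.map (fun d => Deriv.lamPair hxy hx hy d))
    | tensL hd _ hM ih =>
        exact ih.cc (fun _ _ h => EqCC.tensL hd h hM)
          (fun N hN => hN.map2 (fun d e => Deriv.tens hd d e) hM)
    | tensR hd hM _ ih =>
        exact ih.cc (fun _ _ h => EqCC.tensR hd hM h)
          (fun N hN => hM.map2 (fun d e => Deriv.tens hd d e) hN)
    | sum α _ hV ih => exact ih.sumc α hV
    | refl h => exact Or.inl ⟨rfl, h⟩
    | symm _ ih => exact ih.symmc
    | trans _ _ ih₁ ih₂ => exact ih₁.transc ih₂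
  · rintro (⟨rfl, hT⟩ | h)
    · exact Eqv.refl hT
    · exact h.toEqv

end QL
end

section
/- If the variable x occurs free exactly once in the QΛ term M, and the bit-constant labels occurring in M are pairwise distinct, the bit-constant labels occurring in N are pairwise distinct, and no label occurs in both M and N, then the bit-constant labels occurring in the substituted term M{N/x} are pairwise distinct. -/
namespace QL

variable {G : GateSet}

/-- The list of labels of the bit constants occurring in a term. -/
def labelsL : Term G → List ℕ
  | .var _ => []
  | .gate _ => []
  | .bit _ ℓ => [ℓ]
  | .tens M N => labelsL M ++ labelsL N
  | .app M N => labelsL M ++ labelsL N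
  | .lam _ M => labelsL M
  | .lamPair _ _ M => labelsL M

/-- The number of free occurrences of a variable in a term. -/
def fcount (x : ℕ) : Term G → ℕ
  | .var z => if z = x then 1 else 0
  | .bit _ _ => 0
  | .gate _ => 0
  | .tens M N => fcount x M + fcount x N
  | .app M N => fcount x M + fcount x N
  | .lam y M => if y = x then 0 else fcount x M
  | .lamPair y w M => if y = x ∨ w = x then 0 else fcount x M

/-!
Renaming bound variables changes no labels, so the multiset of labels of `M{N/x}` is that of
`M` plus one copy of the labels of `N` for each free occurrence of `x`. When `x` occurs exactly
once, this is the sum of two duplicate-free multisets with no common element.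
-/

lemma tsize_pos (M : Term G) : 0 < tsize M := by
  cases M <;> simp [tsize]

@[simp]
lemma tsize_ren (M : Term G) (y z : ℕ) : tsize (ren M y z) = tsize M := by
  induction M <;> simp only [ren, tsize] <;> (try split_ifs) <;> simp [tsize, *]

@[simp]
lemma labelsL_ren (M : Term G) (y z : ℕ) : labelsL (ren M y z) = labelsL M := by
  induction M <;> simp only [ren, labelsL] <;> (try split_ifs) <;> simp [labelsL, *]

lemma fcount_ren {x y : ℕ} (z : ℕ) (hxy : x ≠ y) (hxz : x ≠ z) (M : Term G) :
    fcount x (ren M y z) = fcount x M := by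
  induction M with
  | var a => by_cases a = y <;> simp [ren, fcount, *, Ne.symm hxy, Ne.symm hxz]
  | lam a M₁ ih => simp only [ren]; split_ifs <;> simp [fcount, ih]
  | lamPair a b M₁ ih => simp only [ren]; split_ifs <;> simp [fcount, ih]
  | _ => simp [ren, fcount, *]

lemma ne_freshVar_of_mem {x : ℕ} {s : Finset ℕ} (h : x ∈ s) : x ≠ freshVar s := by
  have : x ≤ s.sup id := Finset.le_sup (f := id) h
  unfold freshVar
  omega

@[simp]
lemma ssubstF_nil (k : ℕ) (M : Term G) : ssubstF k M [] = M := by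
  induction k generalizing M with
  | zero => rfl
  | succ k ih => cases M <;> simp [ssubstF, lookupV, fvs, ih]

lemma labelsL_ssubstF_single {k : ℕ} {M : Term G} (hk : tsize M ≤ k) (x : ℕ) (N : Term G) :
    (labelsL (ssubstF k M [(x, N)]) : Multiset ℕ) =
      labelsL M + fcount x M • (labelsL N : Multiset ℕ) := by
  induction k generalizing M with
  | zero => exact absurd hk (tsize_pos M).not_ge
  | succ k ih =>
    cases M with
    | var a =>
      rcases eq_or_ne a x with rfl | hax
      · simp [ssubstF, lookupV, labelsL, fcount]
      · simp [ssubstF, lookupV, labelsL, fcount, hax, hax.symm]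
    | bit b ℓ => simp [ssubstF, labelsL, fcount]
    | gate g => simp [ssubstF, labelsL, fcount]
    | tens M₁ M₂ | app M₁ M₂ =>
      simp only [tsize] at hk
      simp only [ssubstF, labelsL, fcount, ← Multiset.coe_add, add_smul,
        ih (M := M₁) (by omega), ih (M := M₂) (by omega)]
      abel
    | lam a M₁ =>
      replace hk : tsize M₁ ≤ k := by simpa [tsize] using hk
      rcases eq_or_ne x a with rfl | hxa
      · simp [ssubstF, fvs, labelsL, fcount]
      have hx : x ∈ doms [(x, N)] := by simp [doms]
      have hσ : ([(x, N)] : SubstMap G).filter (fun p => p.1 ≠ a) = [(x, N)] := by simp [hxa]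
      simp only [ssubstF, hσ, labelsL, fcount, if_neg hxa.symm]
      split_ifs
      -- the fresh binder avoids the domain `{x}`, so renaming to it keeps the occurrences of `x`
      · refine (ih (by simpa)).trans ?_
        simp [fcount_ren, ne_freshVar_of_mem, hx, hxa]
      · exact ih hk
    | lamPair a b M₁ =>
      replace hk : tsize M₁ ≤ k := by simpa [tsize] using hk
      by_cases hab : x = a ∨ x = b
      · rcases hab with rfl | rfl <;> simp [ssubstF, fvs, labelsL, fcount]
      obtain ⟨hxa, hxb⟩ : x ≠ a ∧ x ≠ b := not_or.mp hab
      have hx : x ∈ doms [(x, N)] := by simp [doms]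
      have hσ : ([(x, N)] : SubstMap G).filter (fun p => p.1 ≠ a ∧ p.1 ≠ b) = [(x, N)] := by
        simp [hxa, hxb]
      simp only [ssubstF, hσ, labelsL, fcount, if_neg (not_or.mpr ⟨hxa.symm, hxb.symm⟩)]
      split_ifs
      · refine (ih (by simpa)).trans ?_
        simp [fcount_ren, ne_freshVar_of_mem, hx, hxa, hxb]
      · exact ih hk

/-- If `x` occurs free exactly once in `M`, the bit-constant labels of `M` are
pairwise distinct, those of `N` are pairwise distinct, and no label occurs in
both, then the labels of `M{N/x}` are pairwise distinct. -/
theorem labels_nodup_subst (G : GateSet) (M N : Term G) (x : ℕ)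
    (hocc : fcount x M = 1)
    (hM : (labelsL M).Nodup) (hN : (labelsL N).Nodup)
    (hdisj : ∀ ℓ ∈ labelsL M, ℓ ∉ labelsL N) :
    (labelsL (subst1 M x N)).Nodup := by
  have hlabels : (labelsL (subst1 M x N) : Multiset ℕ) = labelsL M + labelsL N := by
    rw [subst1, ssubst, labelsL_ssubstF_single le_rfl, hocc, one_smul]
  rw [← Multiset.coe_nodup, hlabels, Multiset.nodup_add]
  exact ⟨hM, hN, Multiset.disjoint_left.mpr fun hℓ => hdisj _ hℓ⟩

end QL
end
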